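/- arXiv:1306.1257 — 4 statements merged into one kernel-verified Lean document; each statement's English description precedes it below -/
import Mathlib

section
/- Let S and T be Steiner triple systems of orders m and n respectively. Then γ(S×T) = 6·γ(S)·γ(T) + n·γ(S) + m·γ(T). -/
set_option linter.unusedSectionVars false
set_option linter.unusedVariables false
set_option maxHeartbeats 2000000


/-- A Steiner quasigroup structure on `X`. -/
def IsSteinerQuasigroup {X : Type*} (star : X → X → X) : Prop :=
  (∀ a, star a a = a) ∧ (∀ a b, star a b = star b a) ∧
    (∀ a b, star a (star a b) = b)

/-- The blocks of the Steiner triple system associated to a Steiner quasigroup: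
the 3-element subsets `{a,b,c}` with `a,b,c` distinct and `a ⋆ b = c`. -/
def blocksOf {X : Type*} [DecidableEq X] (star : X → X → X) : Set (Finset X) :=
  {B | ∃ a b c : X, a ≠ b ∧ a ≠ c ∧ b ≠ c ∧ B = {a, b, c} ∧ star a b = c}

/-- `A(S) = {{a⋆b, b⋆c, c⋆a} : a,b,c pairwise distinct, {a,b,c} ∉ S}`. -/
def ASet {X : Type*} [DecidableEq X] (star : X → X → X) : Set (Finset X) :=
  {B | ∃ a b c : X, a ≠ b ∧ a ≠ c ∧ b ≠ c ∧
    ({a, b, c} : Finset X) ∉ blocksOf star ∧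
    B = {star a b, star b c, star c a}}

/-- `B(S) = {{a⋆b, b⋆c, c⋆a} : a,b,c pairwise distinct}`. -/
def BSet {X : Type*} [DecidableEq X] (star : X → X → X) : Set (Finset X) :=
  {B | ∃ a b c : X, a ≠ b ∧ a ≠ c ∧ b ≠ c ∧
    B = {star a b, star b c, star c a}}

/-- `α(S) = |A(S)|`. -/
noncomputable def alphaInv {X : Type*} [DecidableEq X] (star : X → X → X) : ℕ :=
  (ASet star).ncard

/-- `β(S) = |B(S)|`. -/
noncomputable def betaInv {X : Type*} [DecidableEq X] (star : X → X → X) : ℕ :=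
  (BSet star).ncard

/-- A pasch configuration: four blocks `{a,b,c}, {a,d,e}, {f,b,d}, {f,c,e}`
with `a,b,c,d,e,f` pairwise distinct. -/
def IsPasch {X : Type*} [DecidableEq X] (P : Set (Finset X)) : Prop :=
  ∃ a b c d e f : X, ([a, b, c, d, e, f] : List X).Pairwise (· ≠ ·) ∧
    P = {({a, b, c} : Finset X), {a, d, e}, {f, b, d}, {f, c, e}}

/-- A Steiner triple system is anti-pasch if it contains no pasch configuration. -/
def IsAntiPasch {X : Type*} [DecidableEq X] (star : X → X → X) : Prop :=
  ∀ P : Set (Finset X), IsPasch P → ¬ P ⊆ blocksOf star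


section Basic
variable {X : Type*} [DecidableEq X] {star : X → X → X}
  (h : IsSteinerQuasigroup star)

include h

lemma sq_cancel {a b c : X} (e : star a b = star a c) : b = c := by
  have := congrArg (star a) e
  rwa [h.2.2, h.2.2] at this

lemma sq_ne_left {a b : X} (hab : a ≠ b) : star a b ≠ a := by
  intro e
  apply hab
  have : star a (star a b) = star a a := congrArg (star a) e
  rw [h.2.2, h.1] at this
  exact this.symm

lemma sq_ne_right {a b : X} (hab : a ≠ b) : star a b ≠ b := by
  intro e
  exact sq_ne_left h hab.symm (by rwa [h.2.1] at e)

lemma sq_eq_outer {a b c : X} (e : star a b = star b c) : a = c := by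
  rw [h.2.1] at e; exact sq_cancel h e

lemma sq_cycle {a b c : X} (e : star a b = c) : star b c = a := by
  rw [← e, h.2.1 a b, h.2.2]

lemma sq_cycle' {a b c : X} (e : star a b = c) : star c a = b := by
  rw [h.2.1, ← e, h.2.2]

lemma sq_third {a b c u v w : X} (hab : a ≠ b) (hac : a ≠ c) (hbc : b ≠ c)
    (hc : star a b = c)
    (hu : u ∈ ({a,b,c} : Finset X)) (hv : v ∈ ({a,b,c} : Finset X))
    (hw : w ∈ ({a,b,c} : Finset X)) (huv : u ≠ v) (hwu : w ≠ u) (hwv : w ≠ v) :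
    star u v = w := by
  have h1 : star a b = c := hc
  have h2 : star b c = a := sq_cycle h hc
  have h3 : star c a = b := sq_cycle' h hc
  have h4 : star b a = c := by rw [h.2.1]; exact h1
  have h5 : star c b = a := by rw [h.2.1]; exact h2
  have h6 : star a c = b := by rw [h.2.1]; exact h3
  simp only [Finset.mem_insert, Finset.mem_singleton] at hu hv hw
  rcases hu with rfl|rfl|rfl <;> rcases hv with rfl|rfl|rfl <;>
    rcases hw with rfl|rfl|rfl <;> simp_all

lemma mem_blocks_iff {a b c : X} (hab : a ≠ b) (hac : a ≠ c) (hbc : b ≠ c) :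
    ({a,b,c} : Finset X) ∈ blocksOf star ↔ star a b = c := by
  constructor
  · rintro ⟨p, q, r, hpq, hpr, hqr, hset, hmul⟩
    have ha : a ∈ ({p,q,r} : Finset X) := by rw [← hset]; simp
    have hb : b ∈ ({p,q,r} : Finset X) := by rw [← hset]; simp
    have hcm : c ∈ ({p,q,r} : Finset X) := by rw [← hset]; simp
    exact sq_third h hpq hpr hqr hmul ha hb hcm hab hac.symm hbc.symm
  · intro e
    exact ⟨a, b, c, hab, hac, hbc, rfl, e⟩

/-- image distinctness -/
lemma sq_img_ne₁ {a b c : X} (hab : a ≠ b) (hac : a ≠ c) (hbc : b ≠ c) :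
    star a b ≠ star b c := fun e => hac (sq_eq_outer h e)

lemma sq_img_ne₂ {a b c : X} (hab : a ≠ b) (hac : a ≠ c) (hbc : b ≠ c) :
    star b c ≠ star c a := fun e => hab (sq_eq_outer h e).symm

lemma sq_img_ne₃ {a b c : X} (hab : a ≠ b) (hac : a ≠ c) (hbc : b ≠ c) :
    star a b ≠ star c a := by
  rw [h.2.1 c a]; exact fun e => hbc (sq_cancel h e)

end Basic

/-- The set of blocks `B` such that every distinct triple whose image is `B`
is itself a block. -/
def GSet {X : Type*} [DecidableEq X] (star : X → X → X) : Set (Finset X) :=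
  {B | B ∈ blocksOf star ∧ ∀ p q r : X, p ≠ q → p ≠ r → q ≠ r →
    ({star p q, star q r, star r p} : Finset X) = B →
    ({p, q, r} : Finset X) ∈ blocksOf star}

section Gamma
variable {X : Type*} [DecidableEq X] {star : X → X → X}
  (h : IsSteinerQuasigroup star)

lemma ASet_subset_BSet : ASet star ⊆ BSet star := by
  rintro B ⟨a,b,c,hab,hac,hbc,_,hB⟩
  exact ⟨a,b,c,hab,hac,hbc,hB⟩

include h

lemma BSet_diff_ASet : BSet star \ ASet star = GSet star := by
  ext D
  constructor
  · rintro ⟨⟨a,b,c,hab,hac,hbc,hD⟩, hnA⟩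
    have hblk : ({a,b,c} : Finset X) ∈ blocksOf star := by
      by_contra hnb
      exact hnA ⟨a,b,c,hab,hac,hbc,hnb,hD⟩
    have e1 : star a b = c := (mem_blocks_iff h hab hac hbc).1 hblk
    have e2 : star b c = a := sq_cycle h e1
    have e3 : star c a = b := sq_cycle' h e1
    constructor
    · rw [hD, e1, e2, e3]
      refine ⟨c, a, b, hac.symm, hbc.symm, hab, rfl, e3⟩
    · intro p q r hpq hpr hqr him
      by_contra hnb
      exact hnA ⟨p,q,r,hpq,hpr,hqr,hnb, by rw [← him]⟩
  · rintro ⟨⟨a,b,c,hab,hac,hbc,hD,e1⟩, hG⟩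
    have e2 : star b c = a := sq_cycle h e1
    have e3 : star c a = b := sq_cycle' h e1
    constructor
    · refine ⟨a,b,c,hab,hac,hbc, ?_⟩
      rw [hD, e1, e2, e3]
      ext x; simp; tauto
    · rintro ⟨p,q,r,hpq,hpr,hqr,hnb,him⟩
      exact hnb (hG p q r hpq hpr hqr him.symm)

lemma gamma_eq_ncard_GSet [Fintype X] :
    (betaInv star : ℤ) - alphaInv star = (GSet star).ncard := by
  have hsub : ASet star ⊆ BSet star := ASet_subset_BSet
  have hfin : (BSet star).Finite := Set.toFinite _
  have h1 : alphaInv star ≤ betaInv star := Set.ncard_le_ncard hsub hfin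
  have h2 : (GSet star).ncard = betaInv star - alphaInv star := by
    rw [← BSet_diff_ASet h]
    exact Set.ncard_diff hsub (Set.toFinite _)
  omega

end Gamma

/-! ## The product -/

def prodStar {X Y : Type*} (starS : X → X → X) (starT : Y → Y → Y) :
    X × Y → X × Y → X × Y :=
  fun p q => (starS p.1 q.1, starT p.2 q.2)

section Product
variable {X Y : Type*} [DecidableEq X] [DecidableEq Y]
  {starS : X → X → X} {starT : Y → Y → Y}
  (hS : IsSteinerQuasigroup starS) (hT : IsSteinerQuasigroup starT)

include hS hT in
lemma prod_sq : IsSteinerQuasigroup (prodStar starS starT) := by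
  refine ⟨fun a => ?_, fun a b => ?_, fun a b => ?_⟩ <;>
    simp [prodStar, Prod.ext_iff, hS.1, hT.1, hS.2.1, hT.2.1, hS.2.2, hT.2.2]

/-- Blocks all of whose preimage triples under the `⋆`-image map are blocks,
of "vertical" type. -/
def Vert (starS : X → X → X) (starT : Y → Y → Y) : Set (Finset (X × Y)) :=
  {D | ∃ (a : X) (x y z : Y), x ≠ y ∧ x ≠ z ∧ y ≠ z ∧
    ({x,y,z} : Finset Y) ∈ GSet starT ∧ D = {(a,x),(a,y),(a,z)}}

def Horiz (starS : X → X → X) (starT : Y → Y → Y) : Set (Finset (X × Y)) :=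
  {D | ∃ (x : Y) (a b c : X), a ≠ b ∧ a ≠ c ∧ b ≠ c ∧
    ({a,b,c} : Finset X) ∈ GSet starS ∧ D = {(a,x),(b,x),(c,x)}}

def Diag (starS : X → X → X) (starT : Y → Y → Y) : Set (Finset (X × Y)) :=
  {D | ∃ (a b c : X) (x y z : Y), a ≠ b ∧ a ≠ c ∧ b ≠ c ∧ x ≠ y ∧ x ≠ z ∧ y ≠ z ∧
    ({a,b,c} : Finset X) ∈ GSet starS ∧ ({x,y,z} : Finset Y) ∈ GSet starT ∧
    D = {(a,x),(b,y),(c,z)}}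

include hS hT

lemma vert_subset : Vert starS starT ⊆ GSet (prodStar starS starT) := by
  rintro D ⟨a, x, y, z, hxy, hxz, hyz, ⟨hblkT, hGT⟩, rfl⟩
  have hmul : starT x y = z := (mem_blocks_iff hT hxy hxz hyz).1 hblkT
  constructor
  · refine ⟨(a,x), (a,y), (a,z), by simp [hxy], by simp [hxz], by simp [hyz], rfl, ?_⟩
    simp [prodStar, hS.1, hmul]
  · rintro ⟨p1,p2⟩ ⟨q1,q2⟩ ⟨r1,r2⟩ hpq hpr hqr him
    -- all first coordinates of elements of D are `a`
    have hfst : ∀ e ∈ ({((a:X),x),(a,y),(a,z)} : Finset (X × Y)), e.1 = a := by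
      intro e he
      simp only [Finset.mem_insert, Finset.mem_singleton] at he
      rcases he with rfl|rfl|rfl <;> rfl
    have hmem1 : prodStar starS starT (p1,p2) (q1,q2) ∈
        ({((a:X),x),(a,y),(a,z)} : Finset (X × Y)) := by rw [← him]; simp
    have hmem2 : prodStar starS starT (q1,q2) (r1,r2) ∈
        ({((a:X),x),(a,y),(a,z)} : Finset (X × Y)) := by rw [← him]; simp
    have hmem3 : prodStar starS starT (r1,r2) (p1,p2) ∈
        ({((a:X),x),(a,y),(a,z)} : Finset (X × Y)) := by rw [← him]; simp
    have h1 : starS p1 q1 = a := hfst _ hmem1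
    have h2 : starS q1 r1 = a := hfst _ hmem2
    have h3 : starS r1 p1 = a := hfst _ hmem3
    have hpr1 : r1 = p1 := (sq_eq_outer hS (h1.trans h2.symm)).symm
    have hqp1 : q1 = p1 := sq_eq_outer hS (h2.trans h3.symm)
    rw [hqp1, hS.1] at h1
    have hq1 : q1 = a := hqp1.trans h1
    have hr1 : r1 = a := hpr1.trans h1
    rw [h1] at hpq hpr
    rw [hq1] at hpq hqr
    rw [hr1] at hpr hqr
    simp only [h1, hq1, hr1] at him
    rw [h1, hq1, hr1]
    have hpq2 : p2 ≠ q2 := fun e => hpq (by rw [e])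
    have hpr2 : p2 ≠ r2 := fun e => hpr (by rw [e])
    have hqr2 : q2 ≠ r2 := fun e => hqr (by rw [e])
    -- extract second-coordinate image equality
    have himg : ({starT p2 q2, starT q2 r2, starT r2 p2} : Finset Y) = {x,y,z} := by
      have hinj : Function.Injective (Prod.mk a : Y → X × Y) := fun u v e => by
        simpa using e
      apply Finset.image_injective hinj
      have : ({(a, starT p2 q2), (a, starT q2 r2), (a, starT r2 p2)} : Finset (X × Y))
          = {(a,x),(a,y),(a,z)} := by
        simpa [prodStar, hS.1] using him
      simpa using this
    have hblk2 : ({p2,q2,r2} : Finset Y) ∈ blocksOf starT :=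
      hGT p2 q2 r2 hpq2 hpr2 hqr2 himg
    have hmul2 : starT p2 q2 = r2 := (mem_blocks_iff hT hpq2 hpr2 hqr2).1 hblk2
    exact ⟨(a,p2),(a,q2),(a,r2), hpq, hpr, hqr, rfl, by simp [prodStar, Prod.ext_iff, hS.1, hmul2]⟩


lemma horiz_subset : Horiz starS starT ⊆ GSet (prodStar starS starT) := by
  rintro D ⟨x, a, b, c, hab, hac, hbc, ⟨hblkS, hGS⟩, rfl⟩
  have hmul : starS a b = c := (mem_blocks_iff hS hab hac hbc).1 hblkS
  constructor
  · refine ⟨(a,x), (b,x), (c,x), by simp [hab], by simp [hac], by simp [hbc], rfl, ?_⟩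
    simp [prodStar, Prod.ext_iff, hT.1, hmul]
  · rintro ⟨p1,p2⟩ ⟨q1,q2⟩ ⟨r1,r2⟩ hpq hpr hqr him
    have hsnd : ∀ e ∈ ({(a,(x:Y)),(b,x),(c,x)} : Finset (X × Y)), e.2 = x := by
      intro e he
      simp only [Finset.mem_insert, Finset.mem_singleton] at he
      rcases he with rfl|rfl|rfl <;> rfl
    have hmem1 : prodStar starS starT (p1,p2) (q1,q2) ∈
        ({(a,(x:Y)),(b,x),(c,x)} : Finset (X × Y)) := by rw [← him]; simp
    have hmem2 : prodStar starS starT (q1,q2) (r1,r2) ∈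
        ({(a,(x:Y)),(b,x),(c,x)} : Finset (X × Y)) := by rw [← him]; simp
    have hmem3 : prodStar starS starT (r1,r2) (p1,p2) ∈
        ({(a,(x:Y)),(b,x),(c,x)} : Finset (X × Y)) := by rw [← him]; simp
    have h1 : starT p2 q2 = x := hsnd _ hmem1
    have h2 : starT q2 r2 = x := hsnd _ hmem2
    have h3 : starT r2 p2 = x := hsnd _ hmem3
    have hpr2 : r2 = p2 := (sq_eq_outer hT (h1.trans h2.symm)).symm
    have hqp2 : q2 = p2 := sq_eq_outer hT (h2.trans h3.symm)
    rw [hqp2, hT.1] at h1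
    have hq2 : q2 = x := hqp2.trans h1
    have hr2 : r2 = x := hpr2.trans h1
    rw [h1] at hpq hpr
    rw [hq2] at hpq hqr
    rw [hr2] at hpr hqr
    simp only [h1, hq2, hr2] at him
    rw [h1, hq2, hr2]
    have hpq1 : p1 ≠ q1 := fun e => hpq (by rw [e])
    have hpr1 : p1 ≠ r1 := fun e => hpr (by rw [e])
    have hqr1 : q1 ≠ r1 := fun e => hqr (by rw [e])
    have himg : ({starS p1 q1, starS q1 r1, starS r1 p1} : Finset X) = {a,b,c} := by
      have hinj : Function.Injective (fun u : X => (u, x)) := fun u v e => by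
        simpa using e
      apply Finset.image_injective hinj
      have : ({(starS p1 q1, x), (starS q1 r1, x), (starS r1 p1, x)} : Finset (X × Y))
          = {(a,x),(b,x),(c,x)} := by
        simpa [prodStar, hT.1] using him
      simpa using this
    have hblk1 : ({p1,q1,r1} : Finset X) ∈ blocksOf starS :=
      hGS p1 q1 r1 hpq1 hpr1 hqr1 himg
    have hmul1 : starS p1 q1 = r1 := (mem_blocks_iff hS hpq1 hpr1 hqr1).1 hblk1
    exact ⟨(p1,x),(q1,x),(r1,x), hpq, hpr, hqr, rfl,
      by simp [prodStar, Prod.ext_iff, hT.1, hmul1]⟩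

lemma diag_subset : Diag starS starT ⊆ GSet (prodStar starS starT) := by
  rintro D ⟨a, b, c, x, y, z, hab, hac, hbc, hxy, hxz, hyz,
    ⟨hblkS, hGS⟩, ⟨hblkT, hGT⟩, rfl⟩
  have hmS : starS a b = c := (mem_blocks_iff hS hab hac hbc).1 hblkS
  have hmT : starT x y = z := (mem_blocks_iff hT hxy hxz hyz).1 hblkT
  constructor
  · refine ⟨(a,x), (b,y), (c,z), by simp [hab], by simp [hac], by simp [hbc], rfl, ?_⟩
    simp [prodStar, Prod.ext_iff, hmS, hmT]
  · rintro ⟨p1,p2⟩ ⟨q1,q2⟩ ⟨r1,r2⟩ hpq hpr hqr him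
    have hfst_inj : ∀ e ∈ ({(a,x),(b,y),(c,z)} : Finset (X × Y)),
        ∀ f ∈ ({(a,x),(b,y),(c,z)} : Finset (X × Y)), e.1 = f.1 → e = f := by
      intro e he f hf hef
      simp only [Finset.mem_insert, Finset.mem_singleton] at he hf
      rcases he with rfl|rfl|rfl <;> rcases hf with rfl|rfl|rfl <;> simp_all
    have hsnd_inj : ∀ e ∈ ({(a,x),(b,y),(c,z)} : Finset (X × Y)),
        ∀ f ∈ ({(a,x),(b,y),(c,z)} : Finset (X × Y)), e.2 = f.2 → e = f := by
      intro e he f hf hef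
      simp only [Finset.mem_insert, Finset.mem_singleton] at he hf
      rcases he with rfl|rfl|rfl <;> rcases hf with rfl|rfl|rfl <;> simp_all
    have hmem1 : prodStar starS starT (p1,p2) (q1,q2) ∈
        ({(a,x),(b,y),(c,z)} : Finset (X × Y)) := by rw [← him]; simp
    have hmem2 : prodStar starS starT (q1,q2) (r1,r2) ∈
        ({(a,x),(b,y),(c,z)} : Finset (X × Y)) := by rw [← him]; simp
    have hmem3 : prodStar starS starT (r1,r2) (p1,p2) ∈
        ({(a,x),(b,y),(c,z)} : Finset (X × Y)) := by rw [← him]; simp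
    -- first coordinates pairwise distinct
    have hpq1 : p1 ≠ q1 := by
      intro e
      have hef : (prodStar starS starT (q1,q2) (r1,r2)).1
          = (prodStar starS starT (r1,r2) (p1,p2)).1 := by
        show starS q1 r1 = starS r1 p1
        rw [e, hS.2.1]
      have := congrArg Prod.snd (hfst_inj _ hmem2 _ hmem3 hef)
      have h2 : q2 = p2 := sq_eq_outer hT this
      exact hpq (Prod.ext e h2.symm)
    have hpr1 : p1 ≠ r1 := by
      intro e
      have hef : (prodStar starS starT (p1,p2) (q1,q2)).1
          = (prodStar starS starT (q1,q2) (r1,r2)).1 := by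
        show starS p1 q1 = starS q1 r1
        rw [e, hS.2.1]
      have := congrArg Prod.snd (hfst_inj _ hmem1 _ hmem2 hef)
      have h2 : p2 = r2 := sq_eq_outer hT this
      exact hpr (Prod.ext e h2)
    have hqr1 : q1 ≠ r1 := by
      intro e
      have hef : (prodStar starS starT (p1,p2) (q1,q2)).1
          = (prodStar starS starT (r1,r2) (p1,p2)).1 := by
        show starS p1 q1 = starS r1 p1
        rw [e, hS.2.1]
      have := congrArg Prod.snd (hfst_inj _ hmem1 _ hmem3 hef)
      -- this : starT p2 q2 = starT r2 p2
      have this' : starT p2 q2 = starT r2 p2 := this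
      have h2 : q2 = r2 := by
        rw [hT.2.1 r2 p2] at this'
        exact (sq_cancel hT this')
      exact hqr (Prod.ext e h2)
    -- second coordinates pairwise distinct
    have hpq2 : p2 ≠ q2 := by
      intro e
      have hef : (prodStar starS starT (q1,q2) (r1,r2)).2
          = (prodStar starS starT (r1,r2) (p1,p2)).2 := by
        show starT q2 r2 = starT r2 p2
        rw [e, hT.2.1]
      have := congrArg Prod.fst (hsnd_inj _ hmem2 _ hmem3 hef)
      have h2 : q1 = p1 := sq_eq_outer hS this
      exact hpq (Prod.ext h2.symm e)
    have hpr2 : p2 ≠ r2 := by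
      intro e
      have hef : (prodStar starS starT (p1,p2) (q1,q2)).2
          = (prodStar starS starT (q1,q2) (r1,r2)).2 := by
        show starT p2 q2 = starT q2 r2
        rw [e, hT.2.1]
      have := congrArg Prod.fst (hsnd_inj _ hmem1 _ hmem2 hef)
      have h2 : p1 = r1 := sq_eq_outer hS this
      exact hpr (Prod.ext h2 e)
    have hqr2 : q2 ≠ r2 := by
      intro e
      have hef : (prodStar starS starT (p1,p2) (q1,q2)).2
          = (prodStar starS starT (r1,r2) (p1,p2)).2 := by
        show starT p2 q2 = starT r2 p2
        rw [e, hT.2.1]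
      have := congrArg Prod.fst (hsnd_inj _ hmem1 _ hmem3 hef)
      have this' : starS p1 q1 = starS r1 p1 := this
      have h2 : q1 = r1 := by
        rw [hS.2.1 r1 p1] at this'
        exact (sq_cancel hS this')
      exact hqr (Prod.ext h2 e)
    -- image equalities on coordinates
    have himgS : ({starS p1 q1, starS q1 r1, starS r1 p1} : Finset X) = {a,b,c} := by
      have := congrArg (Finset.image Prod.fst) him
      simpa [prodStar] using this
    have himgT : ({starT p2 q2, starT q2 r2, starT r2 p2} : Finset Y) = {x,y,z} := by
      have := congrArg (Finset.image Prod.snd) him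
      simpa [prodStar] using this
    have hblk1 : ({p1,q1,r1} : Finset X) ∈ blocksOf starS :=
      hGS p1 q1 r1 hpq1 hpr1 hqr1 himgS
    have hblk2 : ({p2,q2,r2} : Finset Y) ∈ blocksOf starT :=
      hGT p2 q2 r2 hpq2 hpr2 hqr2 himgT
    have hmul1 : starS p1 q1 = r1 := (mem_blocks_iff hS hpq1 hpr1 hqr1).1 hblk1
    have hmul2 : starT p2 q2 = r2 := (mem_blocks_iff hT hpq2 hpr2 hqr2).1 hblk2
    exact ⟨(p1,p2),(q1,q2),(r1,r2), hpq, hpr, hqr, rfl,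
      by simp [prodStar, Prod.ext_iff, hmul1, hmul2]⟩

lemma comp_vert_G {a : X} {x y z : Y} (hxy : x ≠ y) (hxz : x ≠ z) (hyz : y ≠ z)
    (hmT : starT x y = z)
    (hG : ∀ p q r : X × Y, p ≠ q → p ≠ r → q ≠ r →
      ({prodStar starS starT p q, prodStar starS starT q r,
        prodStar starS starT r p} : Finset (X × Y)) = {(a,x),(a,y),(a,z)} →
      ({p,q,r} : Finset (X × Y)) ∈ blocksOf (prodStar starS starT)) :
    ({x,y,z} : Finset Y) ∈ GSet starT := by
  refine ⟨(mem_blocks_iff hT hxy hxz hyz).2 hmT, ?_⟩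
  intro p q r hpq hpr hqr him
  have hblk := hG (a,p) (a,q) (a,r) (by simp [hpq]) (by simp [hpr]) (by simp [hqr]) ?_
  · have := (mem_blocks_iff (prod_sq hS hT) (a := ((a:X),p)) (b := (a,q)) (c := (a,r))
      (by simp [hpq]) (by simp [hpr]) (by simp [hqr])).1 hblk
    have hm : starT p q = r := congrArg Prod.snd this
    exact (mem_blocks_iff hT hpq hpr hqr).2 hm
  · have : (({starT p q, starT q r, starT r p} : Finset Y)).image (Prod.mk a)
        = (({x,y,z} : Finset Y)).image (Prod.mk a) := by rw [him]
    simpa [prodStar, hS.1] using this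

lemma comp_horiz_G {x : Y} {a b c : X} (hab : a ≠ b) (hac : a ≠ c) (hbc : b ≠ c)
    (hmS : starS a b = c)
    (hG : ∀ p q r : X × Y, p ≠ q → p ≠ r → q ≠ r →
      ({prodStar starS starT p q, prodStar starS starT q r,
        prodStar starS starT r p} : Finset (X × Y)) = {(a,x),(b,x),(c,x)} →
      ({p,q,r} : Finset (X × Y)) ∈ blocksOf (prodStar starS starT)) :
    ({a,b,c} : Finset X) ∈ GSet starS := by
  refine ⟨(mem_blocks_iff hS hab hac hbc).2 hmS, ?_⟩
  intro p q r hpq hpr hqr him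
  have hblk := hG (p,x) (q,x) (r,x) (by simp [hpq]) (by simp [hpr]) (by simp [hqr]) ?_
  · have := (mem_blocks_iff (prod_sq hS hT) (a := (p,(x:Y))) (b := (q,x)) (c := (r,x))
      (by simp [hpq]) (by simp [hpr]) (by simp [hqr])).1 hblk
    have hm : starS p q = r := congrArg Prod.fst this
    exact (mem_blocks_iff hS hpq hpr hqr).2 hm
  · have : (({starS p q, starS q r, starS r p} : Finset X)).image (fun u => (u, x))
        = (({a,b,c} : Finset X)).image (fun u => (u, x)) := by rw [him]
    simpa [prodStar, hT.1] using this

lemma comp_diag_left_G {a b c : X} {x y z : Y}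
    (hab : a ≠ b) (hac : a ≠ c) (hbc : b ≠ c)
    (hxy : x ≠ y) (hxz : x ≠ z) (hyz : y ≠ z)
    (hmS : starS a b = c) (hmT : starT x y = z)
    (hG : ∀ p q r : X × Y, p ≠ q → p ≠ r → q ≠ r →
      ({prodStar starS starT p q, prodStar starS starT q r,
        prodStar starS starT r p} : Finset (X × Y)) = {(a,x),(b,y),(c,z)} →
      ({p,q,r} : Finset (X × Y)) ∈ blocksOf (prodStar starS starT)) :
    ({a,b,c} : Finset X) ∈ GSet starS := by
  refine ⟨(mem_blocks_iff hS hab hac hbc).2 hmS, ?_⟩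
  intro p q r hpq hpr hqr him
  set μ : X → Y := fun w => if w = a then x else if w = b then y else z with hμ
  have hμa : μ a = x := by simp [hμ]
  have hμb : μ b = y := by simp [hμ, hab.symm]
  have hμc : μ c = z := by simp [hμ, hac.symm, hbc.symm]
  have hμmem : ∀ w, μ w ∈ ({x,y,z} : Finset Y) := by
    intro w; simp only [hμ]; split_ifs <;> simp
  have hμinj : ∀ u v, u ∈ ({a,b,c} : Finset X) → v ∈ ({a,b,c} : Finset X) →
      u ≠ v → μ u ≠ μ v := by
    intro u v hu hv huv
    simp only [Finset.mem_insert, Finset.mem_singleton] at hu hv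
    rcases hu with rfl|rfl|rfl <;> rcases hv with rfl|rfl|rfl <;>
      simp_all [hμa, hμb, hμc, Ne.symm hxy, Ne.symm hxz, Ne.symm hyz]
  set s := starS p q with hs
  set t := starS q r with ht
  set u := starS r p with hu
  have hst : s ≠ t := sq_img_ne₁ hS hpq hpr hqr
  have htu : t ≠ u := sq_img_ne₂ hS hpq hpr hqr
  have hsu : s ≠ u := sq_img_ne₃ hS hpq hpr hqr
  have hsmem : s ∈ ({a,b,c} : Finset X) := by rw [← him]; simp
  have htmem : t ∈ ({a,b,c} : Finset X) := by rw [← him]; simp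
  have humem : u ∈ ({a,b,c} : Finset X) := by rw [← him]; simp
  have e1 : starT (μ t) (μ u) = μ s :=
    sq_third hT hxy hxz hyz hmT (hμmem t) (hμmem u) (hμmem s)
      (hμinj t u htmem humem htu) (hμinj s t hsmem htmem hst)
      (hμinj s u hsmem humem hsu)
  have e2 : starT (μ u) (μ s) = μ t :=
    sq_third hT hxy hxz hyz hmT (hμmem u) (hμmem s) (hμmem t)
      (hμinj u s humem hsmem hsu.symm) (hμinj t u htmem humem htu)
      (hμinj t s htmem hsmem hst.symm)
  have e3 : starT (μ s) (μ t) = μ u :=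
    sq_third hT hxy hxz hyz hmT (hμmem s) (hμmem t) (hμmem u)
      (hμinj s t hsmem htmem hst) (hμinj u s humem hsmem hsu.symm)
      (hμinj u t humem htmem htu.symm)
  have hblk := hG (p, μ t) (q, μ u) (r, μ s)
    (by simp [hpq]) (by simp [hpr]) (by simp [hqr]) ?_
  · have := (mem_blocks_iff (prod_sq hS hT) (a := (p, μ t)) (b := (q, μ u))
      (c := (r, μ s)) (by simp [hpq]) (by simp [hpr]) (by simp [hqr])).1 hblk
    have hm : starS p q = r := congrArg Prod.fst this
    exact (mem_blocks_iff hS hpq hpr hqr).2 hm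
  · have himg : (({s,t,u} : Finset X)).image (fun w => (w, μ w))
        = (({a,b,c} : Finset X)).image (fun w => (w, μ w)) := by rw [him]
    have hL : ({prodStar starS starT (p, μ t) (q, μ u),
        prodStar starS starT (q, μ u) (r, μ s),
        prodStar starS starT (r, μ s) (p, μ t)} : Finset (X × Y))
        = {(s, μ s), (t, μ t), (u, μ u)} := by
      simp only [prodStar, ← hs, ← ht, ← hu, e1, e2, e3]
    rw [hL]
    simpa [hμa, hμb, hμc] using himg

lemma comp_diag_right_G {a b c : X} {x y z : Y}
    (hab : a ≠ b) (hac : a ≠ c) (hbc : b ≠ c)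
    (hxy : x ≠ y) (hxz : x ≠ z) (hyz : y ≠ z)
    (hmS : starS a b = c) (hmT : starT x y = z)
    (hG : ∀ p q r : X × Y, p ≠ q → p ≠ r → q ≠ r →
      ({prodStar starS starT p q, prodStar starS starT q r,
        prodStar starS starT r p} : Finset (X × Y)) = {(a,x),(b,y),(c,z)} →
      ({p,q,r} : Finset (X × Y)) ∈ blocksOf (prodStar starS starT)) :
    ({x,y,z} : Finset Y) ∈ GSet starT := by
  refine ⟨(mem_blocks_iff hT hxy hxz hyz).2 hmT, ?_⟩
  intro p q r hpq hpr hqr him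
  set ν : Y → X := fun w => if w = x then a else if w = y then b else c with hν
  have hνa : ν x = a := by simp [hν]
  have hνb : ν y = b := by simp [hν, hxy.symm]
  have hνc : ν z = c := by simp [hν, hxz.symm, hyz.symm]
  have hνmem : ∀ w, ν w ∈ ({a,b,c} : Finset X) := by
    intro w; simp only [hν]; split_ifs <;> simp
  have hνinj : ∀ u v, u ∈ ({x,y,z} : Finset Y) → v ∈ ({x,y,z} : Finset Y) →
      u ≠ v → ν u ≠ ν v := by
    intro u v hu hv huv
    simp only [Finset.mem_insert, Finset.mem_singleton] at hu hv
    rcases hu with rfl|rfl|rfl <;> rcases hv with rfl|rfl|rfl <;>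
      simp_all [hνa, hνb, hνc, Ne.symm hab, Ne.symm hac, Ne.symm hbc]
  set s := starT p q with hs
  set t := starT q r with ht
  set u := starT r p with hu
  have hst : s ≠ t := sq_img_ne₁ hT hpq hpr hqr
  have htu : t ≠ u := sq_img_ne₂ hT hpq hpr hqr
  have hsu : s ≠ u := sq_img_ne₃ hT hpq hpr hqr
  have hsmem : s ∈ ({x,y,z} : Finset Y) := by rw [← him]; simp
  have htmem : t ∈ ({x,y,z} : Finset Y) := by rw [← him]; simp
  have humem : u ∈ ({x,y,z} : Finset Y) := by rw [← him]; simp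
  have e1 : starS (ν t) (ν u) = ν s :=
    sq_third hS hab hac hbc hmS (hνmem t) (hνmem u) (hνmem s)
      (hνinj t u htmem humem htu) (hνinj s t hsmem htmem hst)
      (hνinj s u hsmem humem hsu)
  have e2 : starS (ν u) (ν s) = ν t :=
    sq_third hS hab hac hbc hmS (hνmem u) (hνmem s) (hνmem t)
      (hνinj u s humem hsmem hsu.symm) (hνinj t u htmem humem htu)
      (hνinj t s htmem hsmem hst.symm)
  have e3 : starS (ν s) (ν t) = ν u :=
    sq_third hS hab hac hbc hmS (hνmem s) (hνmem t) (hνmem u)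
      (hνinj s t hsmem htmem hst) (hνinj u s humem hsmem hsu.symm)
      (hνinj u t humem htmem htu.symm)
  have hblk := hG (ν t, p) (ν u, q) (ν s, r)
    (by simp [hpq]) (by simp [hpr]) (by simp [hqr]) ?_
  · have := (mem_blocks_iff (prod_sq hS hT) (a := (ν t, p)) (b := (ν u, q))
      (c := (ν s, r)) (by simp [hpq]) (by simp [hpr]) (by simp [hqr])).1 hblk
    have hm : starT p q = r := congrArg Prod.snd this
    exact (mem_blocks_iff hT hpq hpr hqr).2 hm
  · have himg : (({s,t,u} : Finset Y)).image (fun w => (ν w, w))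
        = (({x,y,z} : Finset Y)).image (fun w => (ν w, w)) := by rw [him]
    have hL : ({prodStar starS starT (ν t, p) (ν u, q),
        prodStar starS starT (ν u, q) (ν s, r),
        prodStar starS starT (ν s, r) (ν t, p)} : Finset (X × Y))
        = {(ν s, s), (ν t, t), (ν u, u)} := by
      simp only [prodStar, ← hs, ← ht, ← hu, e1, e2, e3]
    rw [hL]
    simpa [hνa, hνb, hνc] using himg

lemma GSet_prod_eq :
    GSet (prodStar starS starT)
      = Horiz starS starT ∪ Vert starS starT ∪ Diag starS starT := by
  apply Set.Subset.antisymm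
  · rintro D ⟨⟨⟨a,x⟩,⟨b,y⟩,⟨c,z⟩, hpq, hpr, hqr, rfl, hmul⟩, hG⟩
    have hmS : starS a b = c := congrArg Prod.fst hmul
    have hmT : starT x y = z := congrArg Prod.snd hmul
    by_cases hab : a = b
    · -- vertical
      subst hab
      have hca : c = a := by rw [← hmS, hS.1]
      rw [hca] at hpr hqr hG ⊢
      have hxy : x ≠ y := fun e => hpq (by rw [e])
      have hxz : x ≠ z := fun e => hpr (by rw [e])
      have hyz : y ≠ z := fun e => hqr (by rw [e])
      exact Or.inl (Or.inr ⟨a, x, y, z, hxy, hxz, hyz,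
        comp_vert_G hS hT hxy hxz hyz hmT hG, rfl⟩)
    · have hca : c ≠ a := fun e => (sq_ne_left hS hab) (by rw [hmS, e])
      have hcb : c ≠ b := fun e => (sq_ne_right hS hab) (by rw [hmS, e])
      by_cases hxy : x = y
      · -- horizontal
        subst hxy
        have hzx : z = x := by rw [← hmT, hT.1]
        rw [hzx] at hqr hG ⊢
        exact Or.inl (Or.inl ⟨x, a, b, c, hab, hca.symm, hcb.symm,
          comp_horiz_G hS hT hab hca.symm hcb.symm hmS hG, rfl⟩)
      · have hzx : z ≠ x := fun e => (sq_ne_left hT hxy) (by rw [hmT, e])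
        have hzy : z ≠ y := fun e => (sq_ne_right hT hxy) (by rw [hmT, e])
        exact Or.inr ⟨a, b, c, x, y, z, hab, hca.symm, hcb.symm, hxy, hzx.symm, hzy.symm,
          comp_diag_left_G hS hT hab hca.symm hcb.symm hxy hzx.symm hzy.symm hmS hmT hG,
          comp_diag_right_G hS hT hab hca.symm hcb.symm hxy hzx.symm hzy.symm hmS hmT hG,
          rfl⟩
  · rintro D (hD | hD)
    · rcases hD with hD | hD
      · exact horiz_subset hS hT hD
      · exact vert_subset hS hT hD
    · exact diag_subset hS hT hD

omit hS hT

lemma horiz_disj_vert : Disjoint (Horiz starS starT) (Vert starS starT) := by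
  rw [Set.disjoint_left]
  rintro D ⟨x, a, b, c, hab, hac, hbc, hG, rfl⟩ ⟨a', x', y', z', hxy, hxz, hyz, hG', he⟩
  have h1 : ((a,x) : X × Y) ∈ ({((a':X),(x':Y)),(a',y'),(a',z')} : Finset (X×Y)) := by
    rw [← he]; simp
  have h2 : ((b,x) : X × Y) ∈ ({((a':X),(x':Y)),(a',y'),(a',z')} : Finset (X×Y)) := by
    rw [← he]; simp
  simp only [Finset.mem_insert, Finset.mem_singleton, Prod.mk.injEq] at h1 h2
  have e1 : a = a' := by tauto
  have e2 : b = a' := by tauto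
  exact hab (e1.trans e2.symm)

lemma horiz_disj_diag : Disjoint (Horiz starS starT) (Diag starS starT) := by
  rw [Set.disjoint_left]
  rintro D ⟨x, a, b, c, hab, hac, hbc, hG, rfl⟩
    ⟨a', b', c', x', y', z', hab', hac', hbc', hxy', hxz', hyz', hG1, hG2, he⟩
  have hsnd : ∀ e ∈ ({(a,x),(b,x),(c,x)} : Finset (X × Y)), e.2 = x := by
    intro e hee
    simp only [Finset.mem_insert, Finset.mem_singleton] at hee
    rcases hee with rfl|rfl|rfl <;> rfl
  have h1 : ((a',x') : X × Y) ∈ ({(a,x),(b,x),(c,x)} : Finset (X×Y)) := by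
    rw [he]; simp
  have h2 : ((b',y') : X × Y) ∈ ({(a,x),(b,x),(c,x)} : Finset (X×Y)) := by
    rw [he]; simp
  have e1 : x' = x := hsnd _ h1
  have e2 : y' = x := hsnd _ h2
  exact hxy' (e1.trans e2.symm)

lemma vert_disj_diag : Disjoint (Vert starS starT) (Diag starS starT) := by
  rw [Set.disjoint_left]
  rintro D ⟨a, x, y, z, hxy, hxz, hyz, hG, rfl⟩
    ⟨a', b', c', x', y', z', hab', hac', hbc', hxy', hxz', hyz', hG1, hG2, he⟩
  have hfst : ∀ e ∈ ({(a,x),(a,y),(a,z)} : Finset (X × Y)), e.1 = a := by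
    intro e hee
    simp only [Finset.mem_insert, Finset.mem_singleton] at hee
    rcases hee with rfl|rfl|rfl <;> rfl
  have h1 : ((a',x') : X × Y) ∈ ({(a,x),(a,y),(a,z)} : Finset (X×Y)) := by
    rw [he]; simp
  have h2 : ((b',y') : X × Y) ∈ ({(a,x),(a,y),(a,z)} : Finset (X×Y)) := by
    rw [he]; simp
  exact hab' ((hfst _ h1).trans (hfst _ h2).symm)

lemma ncard_horiz [Fintype X] [Fintype Y] :
    (Horiz starS starT).ncard = Fintype.card Y * (GSet starS).ncard := by
  classical
  rw [Set.ncard_eq_toFinset_card (Horiz starS starT) (Set.toFinite _),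
    Set.ncard_eq_toFinset_card (GSet starS) (Set.toFinite _)]
  rw [← Finset.card_univ (α := Y), ← Finset.card_product]
  symm
  apply Finset.card_bij (fun (p : Y × Finset X) _ => p.2.image (fun u => (u, p.1)))
  · rintro ⟨x, B⟩ hp
    simp only [Finset.mem_product, Set.Finite.mem_toFinset] at hp ⊢
    obtain ⟨a, b, c, hab, hac, hbc, hB, hmul⟩ := hp.2.1
    refine ⟨x, a, b, c, hab, hac, hbc, hB ▸ hp.2, ?_⟩
    rw [hB]; simp
  · rintro ⟨x, B⟩ hp ⟨x', B'⟩ hp' he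
    simp only [Finset.mem_product, Set.Finite.mem_toFinset] at hp hp'
    obtain ⟨a, b, c, hab, hac, hbc, hB, hmul⟩ := hp.2.1
    have hmema : ((a, x) : X × Y) ∈ B'.image (fun u => (u, x')) := by
      rw [← he, hB]; simp
    simp only [Finset.mem_image] at hmema
    obtain ⟨u, hu, hux⟩ := hmema
    have hxx' : x = x' := ((Prod.ext_iff.1 hux).2).symm
    subst hxx'
    have hBB' : B = B' := by
      have hinj : Function.Injective (fun u : X => (u, x)) := fun u v e => by
        simpa using e
      exact Finset.image_injective hinj he
    rw [hBB']
  · intro D hD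
    simp only [Set.Finite.mem_toFinset] at hD
    obtain ⟨x, a, b, c, hab, hac, hbc, hG, rfl⟩ := hD
    refine ⟨(x, {a,b,c}), ?_, by simp⟩
    simp only [Finset.mem_product, Set.Finite.mem_toFinset]
    exact ⟨Finset.mem_univ _, hG⟩

lemma ncard_vert [Fintype X] [Fintype Y] :
    (Vert starS starT).ncard = Fintype.card X * (GSet starT).ncard := by
  classical
  rw [Set.ncard_eq_toFinset_card (Vert starS starT) (Set.toFinite _),
    Set.ncard_eq_toFinset_card (GSet starT) (Set.toFinite _)]
  rw [← Finset.card_univ (α := X), ← Finset.card_product]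
  symm
  apply Finset.card_bij (fun (p : X × Finset Y) _ => p.2.image (fun u => (p.1, u)))
  · rintro ⟨x, B⟩ hp
    simp only [Finset.mem_product, Set.Finite.mem_toFinset] at hp ⊢
    obtain ⟨a, b, c, hab, hac, hbc, hB, hmul⟩ := hp.2.1
    refine ⟨x, a, b, c, hab, hac, hbc, hB ▸ hp.2, ?_⟩
    rw [hB]; simp
  · rintro ⟨x, B⟩ hp ⟨x', B'⟩ hp' he
    simp only [Finset.mem_product, Set.Finite.mem_toFinset] at hp hp'
    obtain ⟨a, b, c, hab, hac, hbc, hB, hmul⟩ := hp.2.1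
    have hmema : ((x, a) : X × Y) ∈ B'.image (fun u => (x', u)) := by
      rw [← he, hB]; simp
    simp only [Finset.mem_image] at hmema
    obtain ⟨u, hu, hux⟩ := hmema
    have hxx' : x = x' := ((Prod.ext_iff.1 hux).1).symm
    subst hxx'
    have hBB' : B = B' := by
      have hinj : Function.Injective (fun u : Y => (x, u)) := fun u v e => by
        simpa using e
      exact Finset.image_injective hinj he
    rw [hBB']
  · intro D hD
    simp only [Set.Finite.mem_toFinset] at hD
    obtain ⟨a, x, y, z, hxy, hxz, hyz, hG, rfl⟩ := hD
    refine ⟨(a, {x,y,z}), ?_, by simp⟩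
    simp only [Finset.mem_product, Set.Finite.mem_toFinset]
    exact ⟨Finset.mem_univ _, hG⟩

lemma card3 {α : Type*} [DecidableEq α] {a b c : α} (hab : a ≠ b) (hac : a ≠ c)
    (hbc : b ≠ c) : ({a,b,c} : Finset α).card = 3 := by
  rw [Finset.card_insert_of_notMem (by simp [hab, hac]),
    Finset.card_insert_of_notMem (by simp [hbc]), Finset.card_singleton]

lemma triple_pair_card {a b c : X} {u v w : Y} (hab : a ≠ b) (hac : a ≠ c)
    (hbc : b ≠ c) : ({(a,u),(b,v),(c,w)} : Finset (X × Y)).card = 3 :=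
  card3 (by simp [Prod.ext_iff, hab]) (by simp [Prod.ext_iff, hac])
    (by simp [Prod.ext_iff, hbc])

lemma triple_pair_eq_iff {a b c : X} {u v w u' v' w' : Y} (hab : a ≠ b)
    (hac : a ≠ c) (hbc : b ≠ c) :
    (({(a,u),(b,v),(c,w)} : Finset (X × Y)) = {(a,u'),(b,v'),(c,w')})
      ↔ (u = u' ∧ v = v' ∧ w = w') := by
  constructor
  · intro e
    have h1 : ((a,u) : X × Y) ∈ ({(a,u'),(b,v'),(c,w')} : Finset (X × Y)) := by
      rw [← e]; simp
    have h2 : ((b,v) : X × Y) ∈ ({(a,u'),(b,v'),(c,w')} : Finset (X × Y)) := by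
      rw [← e]; simp
    have h3 : ((c,w) : X × Y) ∈ ({(a,u'),(b,v'),(c,w')} : Finset (X × Y)) := by
      rw [← e]; simp
    simp only [Finset.mem_insert, Finset.mem_singleton, Prod.mk.injEq, hab,
      hac, hbc, Ne.symm hab, Ne.symm hac, Ne.symm hbc, false_and] at h1 h2 h3
    tauto
  · rintro ⟨rfl, rfl, rfl⟩; rfl

lemma ncard_diag [Fintype X] [Fintype Y] :
    (Diag starS starT).ncard = 6 * ((GSet starS).ncard * (GSet starT).ncard) := by
  classical
  rw [Set.ncard_eq_toFinset_card (Diag starS starT) (Set.toFinite _),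
    Set.ncard_eq_toFinset_card (GSet starS) (Set.toFinite _),
    Set.ncard_eq_toFinset_card (GSet starT) (Set.toFinite _)]
  set DF := (Set.toFinite (Diag starS starT)).toFinset with hDF
  set GSF := (Set.toFinite (GSet starS)).toFinset with hGSF
  set GTF := (Set.toFinite (GSet starT)).toFinset with hGTF
  have H : ∀ D ∈ DF, (D.image Prod.fst, D.image Prod.snd) ∈ GSF ×ˢ GTF := by
    intro D hD
    rw [hDF, Set.Finite.mem_toFinset] at hD
    obtain ⟨a, b, c, x, y, z, hab, hac, hbc, hxy, hxz, hyz, hG1, hG2, rfl⟩ := hD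
    simp only [Finset.mem_product, hGSF, hGTF, Set.Finite.mem_toFinset]
    constructor
    · simpa using hG1
    · simpa using hG2
  rw [Finset.card_eq_sum_card_fiberwise H]
  have key : ∀ p ∈ GSF ×ˢ GTF,
      (DF.filter (fun D => (D.image Prod.fst, D.image Prod.snd) = p)).card = 6 := by
    rintro ⟨B, C⟩ hp
    simp only [Finset.mem_product, hGSF, hGTF, Set.Finite.mem_toFinset] at hp
    obtain ⟨hGB, hGC⟩ := hp
    obtain ⟨a, b, c, hab, hac, hbc, hB, _⟩ := hGB.1
    obtain ⟨x, y, z, hxy, hxz, hyz, hC, _⟩ := hGC.1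
    subst hB; subst hC
    have hGB' : ({a,b,c} : Finset X) ∈ GSet starS := hGB
    have hGC' : ({x,y,z} : Finset Y) ∈ GSet starT := hGC
    set L : Finset (Finset (X × Y)) :=
      {({(a,x),(b,y),(c,z)} : Finset (X × Y)), {(a,x),(b,z),(c,y)},
        {(a,y),(b,x),(c,z)}, {(a,y),(b,z),(c,x)},
        {(a,z),(b,x),(c,y)}, {(a,z),(b,y),(c,x)}} with hL
    have hfilter :
        DF.filter (fun D => (D.image Prod.fst, D.image Prod.snd) = (({a,b,c} : Finset X), ({x,y,z} : Finset Y))) = L := by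
      apply Finset.Subset.antisymm
      · intro D hD
        simp only [Finset.mem_filter, hDF, Set.Finite.mem_toFinset, Prod.mk.injEq] at hD
        obtain ⟨hDdiag, himgf, himgs⟩ := hD
        obtain ⟨a', b', c', x', y', z', hab', hac', hbc', hxy', hxz', hyz',
          hG1, hG2, rfl⟩ := hDdiag
        have hDcard : ({((a':X),(x':Y)),(b',y'),(c',z')} : Finset (X × Y)).card = 3 :=
          triple_pair_card hab' hac' hbc'
        simp only [Finset.image_insert, Finset.image_singleton] at himgf himgs
        -- extract canonical representatives
        have hamem : a ∈ ({a',b',c'} : Finset X) := by rw [himgf]; simp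
        have hbmem : b ∈ ({a',b',c'} : Finset X) := by rw [himgf]; simp
        have hcmem : c ∈ ({a',b',c'} : Finset X) := by rw [himgf]; simp
        set D := ({((a':X),(x':Y)),(b',y'),(c',z')} : Finset (X × Y)) with hD
        have hexu : ∀ s ∈ ({a',b',c'} : Finset X), ∃ u, (s, u) ∈ D ∧ u ∈ ({x,y,z} : Finset Y) := by
          intro s hs
          simp only [Finset.mem_insert, Finset.mem_singleton] at hs
          rcases hs with rfl|rfl|rfl
          · exact ⟨x', by simp [hD], by rw [← himgs]; simp⟩
          · exact ⟨y', by simp [hD], by rw [← himgs]; simp⟩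
          · exact ⟨z', by simp [hD], by rw [← himgs]; simp⟩
        obtain ⟨u, huD, huC⟩ := hexu a hamem
        obtain ⟨v, hvD, hvC⟩ := hexu b hbmem
        obtain ⟨w, hwD, hwC⟩ := hexu c hcmem
        have hsub : ({(a,u),(b,v),(c,w)} : Finset (X × Y)) ⊆ D := by
          intro e he
          simp only [Finset.mem_insert, Finset.mem_singleton] at he
          rcases he with rfl|rfl|rfl <;> assumption
        have heq : ({(a,u),(b,v),(c,w)} : Finset (X × Y)) = D :=
          Finset.eq_of_subset_of_card_le hsub
            (by rw [hDcard, triple_pair_card hab hac hbc])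
        -- injectivity of snd on D
        have hinj : Set.InjOn Prod.snd (D : Set (X × Y)) := by
          apply Finset.card_image_iff.1
          rw [hDcard]
          have : D.image Prod.snd = {x,y,z} := by
            rw [hD]; simp only [Finset.image_insert, Finset.image_singleton]
            exact himgs
          rw [this, card3 hxy hxz hyz]
        have huv : u ≠ v := fun e => hab (congrArg Prod.fst
          (hinj (Finset.mem_coe.2 huD) (Finset.mem_coe.2 hvD) e))
        have huw : u ≠ w := fun e => hac (congrArg Prod.fst
          (hinj (Finset.mem_coe.2 huD) (Finset.mem_coe.2 hwD) e))
        have hvw : v ≠ w := fun e => hbc (congrArg Prod.fst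
          (hinj (Finset.mem_coe.2 hvD) (Finset.mem_coe.2 hwD) e))
        simp only [Finset.mem_insert, Finset.mem_singleton] at huC hvC hwC
        rw [← heq]
        clear hinj hsub heq hexu huD hvD hwD hamem hbmem hcmem H hDcard
        rcases huC with rfl|rfl|rfl <;> rcases hvC with rfl|rfl|rfl <;>
          rcases hwC with rfl|rfl|rfl <;>
          first
            | exact absurd rfl huv
            | exact absurd rfl huw
            | exact absurd rfl hvw
            | simp [hL]
      · intro D hD
        have hperm : ∀ u v w : Y, u ≠ v → u ≠ w → v ≠ w →
            ({u,v,w} : Finset Y) = {x,y,z} → D = ({(a,u),(b,v),(c,w)} : Finset (X×Y)) →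
            D ∈ DF.filter (fun D => (D.image Prod.fst, D.image Prod.snd)
              = (({a,b,c} : Finset X), ({x,y,z} : Finset Y))) := by
          rintro u v w huv huw hvw hpm rfl
          rw [Finset.mem_filter]
          constructor
          · rw [hDF, Set.Finite.mem_toFinset]
            exact ⟨a, b, c, u, v, w, hab, hac, hbc, huv, huw, hvw, hGB',
              hpm ▸ hGC', rfl⟩
          · simp only [Finset.image_insert, Finset.image_singleton, Prod.mk.injEq]
            refine ⟨?_, hpm⟩
            first | rfl | trivial | simp
        simp only [hL, Finset.mem_insert, Finset.mem_singleton] at hD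
        have pm1 : ({x,z,y} : Finset Y) = {x,y,z} := by ext e; simp; tauto
        have pm2 : ({y,x,z} : Finset Y) = {x,y,z} := by ext e; simp; tauto
        have pm3 : ({y,z,x} : Finset Y) = {x,y,z} := by ext e; simp; tauto
        have pm4 : ({z,x,y} : Finset Y) = {x,y,z} := by ext e; simp; tauto
        have pm5 : ({z,y,x} : Finset Y) = {x,y,z} := by ext e; simp; tauto
        rcases hD with rfl|rfl|rfl|rfl|rfl|rfl
        · exact hperm x y z hxy hxz hyz rfl rfl
        · exact hperm x z y hxz hxy (Ne.symm hyz) pm1 rfl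
        · exact hperm y x z (Ne.symm hxy) hyz hxz pm2 rfl
        · exact hperm y z x hyz (Ne.symm hxy) (Ne.symm hxz) pm3 rfl
        · exact hperm z x y (Ne.symm hxz) (Ne.symm hyz) hxy pm4 rfl
        · exact hperm z y x (Ne.symm hyz) (Ne.symm hxz) (Ne.symm hxy) pm5 rfl
    rw [hfilter, hL]
    rw [Finset.card_insert_of_notMem (by
        simp only [Finset.mem_insert, Finset.mem_singleton,
          triple_pair_eq_iff hab hac hbc]; tauto),
      Finset.card_insert_of_notMem (by
        simp only [Finset.mem_insert, Finset.mem_singleton,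
          triple_pair_eq_iff hab hac hbc]; tauto),
      Finset.card_insert_of_notMem (by
        simp only [Finset.mem_insert, Finset.mem_singleton,
          triple_pair_eq_iff hab hac hbc]; tauto),
      Finset.card_insert_of_notMem (by
        simp only [Finset.mem_insert, Finset.mem_singleton,
          triple_pair_eq_iff hab hac hbc]; tauto),
      Finset.card_insert_of_notMem (by
        simp only [Finset.mem_singleton,
          triple_pair_eq_iff hab hac hbc]; tauto),
      Finset.card_singleton]
  rw [Finset.sum_congr rfl key, Finset.sum_const, Finset.card_product, smul_eq_mul]
  ring

end Product

/-- The formula `γ(S×T) = 6·γ(S)·γ(T) + n·γ(S) + m·γ(T)`, where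
`γ(S) = β(S) − α(S)` (stated in ℤ). -/
theorem stmt13 {X Y : Type*} [Fintype X] [Fintype Y] [DecidableEq X] [DecidableEq Y]
    (starS : X → X → X) (starT : Y → Y → Y)
    (hS : IsSteinerQuasigroup starS) (hT : IsSteinerQuasigroup starT)
    (m n : ℕ) (hm : Fintype.card X = m) (hn : Fintype.card Y = n) :
    (betaInv (fun p q : X × Y => (starS p.1 q.1, starT p.2 q.2)) : ℤ)
        - alphaInv (fun p q : X × Y => (starS p.1 q.1, starT p.2 q.2)) =
      6 * ((betaInv starS : ℤ) - alphaInv starS)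
          * ((betaInv starT : ℤ) - alphaInv starT)
        + n * ((betaInv starS : ℤ) - alphaInv starS)
        + m * ((betaInv starT : ℤ) - alphaInv starT) := by
  subst hm; subst hn
  have h0 : (fun p q : X × Y => (starS p.1 q.1, starT p.2 q.2))
      = prodStar starS starT := rfl
  rw [h0]
  rw [gamma_eq_ncard_GSet (prod_sq hS hT), gamma_eq_ncard_GSet hS,
    gamma_eq_ncard_GSet hT]
  have hcount : (GSet (prodStar starS starT)).ncard
      = Fintype.card Y * (GSet starS).ncard + Fintype.card X * (GSet starT).ncard
        + 6 * ((GSet starS).ncard * (GSet starT).ncard) := by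
    rw [GSet_prod_eq hS hT]
    rw [Set.ncard_union_eq
        (Set.disjoint_union_left.2 ⟨horiz_disj_diag, vert_disj_diag⟩)
        (Set.toFinite _) (Set.toFinite _),
      Set.ncard_union_eq horiz_disj_vert (Set.toFinite _) (Set.toFinite _),
      ncard_horiz, ncard_vert, ncard_diag]
  rw [hcount]
  push_cast
  ring
end

section
/- Let F be a finite field of cardinality q where q = 6t+1 for some natural number t ≥ 1, and suppose that (2 : F)^6 ≠ 1. Then there exists a subset C of the nonzero elements of F with |C| = t such that (i) distinct elements of C lie in distinct cosets of the subgroup H = {u ∈ Fˣ : u^6 = 1} of sixth roots of unity (so C is a complete set of coset representatives of H in Fˣ), and (ii) for every c ∈ C, either 2c ∈ C or c/2 ∈ C. -/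
/-!
The quotient `Q = Fˣ ⧸ H` by the sixth roots of unity has order `t`, and the class `z` of `2` is
nontrivial in it. Writing every element of `Q` uniquely as `w * z ^ i` with `w` running over
representatives of `Q ⧸ ⟨z⟩` and `0 ≤ i < m = orderOf z`, lift it to `w' * 2 ^ i` for a fixed lift
`w'` of `w`. Since `m ≥ 2`, each index `i` has a neighbour `i + 1` or `i - 1` in `[0, m)`, so each
lift `c` has `2c` or `c/2` among the lifts.
-/

namespace QuotientGroup

open Subgroup

theorem mk_eq_mk_iff_ker {G M : Type*} [Group G] [Group M] (f : G →* M) {a b : G} :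
    (a : G ⧸ f.ker) = b ↔ f a = f b := by
  rw [QuotientGroup.eq, MonoidHom.mem_ker, map_mul, map_inv, inv_mul_eq_one]

theorem bijective_out_mul_pow {Q : Type*} [Group Q] {z : Q} (hz : IsOfFinOrder z) :
    Function.Bijective fun p : (Q ⧸ zpowers z) × Fin (orderOf z) => p.1.out * z ^ (p.2 : ℕ) := by
  have hmk (w : Q ⧸ zpowers z) (i : ℕ) : (↑(w.out * z ^ i) : Q ⧸ zpowers z) = w := by
    rw [mk_mul_of_mem _ (npow_mem_zpowers z i), out_eq']
  constructor
  · rintro ⟨w, i⟩ ⟨w', j⟩ h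
    obtain rfl : w = w' := by rw [← hmk w i, ← hmk w' j]; exact congrArg _ h
    exact Prod.ext rfl (Fin.ext (pow_injOn_Iio_orderOf i.2 j.2 (mul_left_cancel h)))
  · intro x
    obtain ⟨i, hi⟩ := (finEquivZPowers hz).surjective
      ⟨_, QuotientGroup.eq.mp (out_eq' (x : Q ⧸ zpowers z))⟩
    have hzi : z ^ (i : ℕ) = (x : Q ⧸ zpowers z).out⁻¹ * x := congrArg Subtype.val hi
    exact ⟨(x, i), by simp only [hzi, mul_inv_cancel_left]⟩

theorem exists_section_mul_or_inv_mul {G : Type*} [CommGroup G] (H : Subgroup G)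
    {g : G} (hg : 1 < orderOf (g : G ⧸ H)) :
    ∃ σ : G ⧸ H → G, (∀ x, (σ x : G ⧸ H) = x) ∧
      ∀ x, σ (g * x) = g * σ x ∨ σ ((g : G ⧸ H)⁻¹ * x) = g⁻¹ * σ x := by
  set z : G ⧸ H := ↑g with hz
  set m := orderOf z
  let e := Equiv.ofBijective _ (bijective_out_mul_pow (orderOf_pos_iff.mp (by omega : 0 < m)))
  let σ' : ((G ⧸ H) ⧸ zpowers z) × Fin m → G := fun p => p.1.out.out * g ^ (p.2 : ℕ)
  have hstep (w : (G ⧸ H) ⧸ zpowers z) (j : ℕ) (hj : j + 1 < m) :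
      e (w, ⟨j + 1, hj⟩) = z * e (w, ⟨j, by omega⟩) ∧
        σ' (w, ⟨j + 1, hj⟩) = g * σ' (w, ⟨j, by omega⟩) := by
    constructor <;> simp only [e, σ', Equiv.ofBijective_apply, pow_succ', mul_left_comm]
  refine ⟨σ' ∘ e.symm, fun x => ?_, fun x => ?_⟩
  · conv_rhs => rw [← e.apply_symm_apply x]
    simp only [σ', e, Function.comp_apply, Equiv.ofBijective_apply, mk_mul, mk_pow, out_eq', hz]
  · obtain ⟨⟨w, i, hi⟩, rfl⟩ := e.surjective x
    by_cases hup : i + 1 < m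
    · left
      rw [← (hstep w i hup).1]
      simp only [Function.comp_apply, e.symm_apply_apply, (hstep w i hup).2]
    · right
      obtain ⟨j, rfl⟩ : ∃ j, i = j + 1 := ⟨i - 1, by omega⟩
      simp only [Function.comp_apply, e.symm_apply_apply]
      rw [(hstep w j hi).1, inv_mul_cancel_left, e.symm_apply_apply, (hstep w j hi).2,
        inv_mul_cancel_left]

end QuotientGroup

theorem one_lt_orderOf_of_ne_one {G : Type*} [Group G] [Finite G] {x : G} (hx : x ≠ 1) :
    1 < orderOf x :=
  lt_of_le_of_ne (isOfFinOrder_of_finite x).orderOf_pos fun h => hx (orderOf_eq_one_iff.mp h.symm)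

theorem FiniteField.two_ne_zero_of_odd_card {F : Type*} [Field F] [Fintype F]
    (hF : Odd (Fintype.card F)) : (2 : F) ≠ 0 :=
  Ring.two_ne_zero fun h => Nat.not_even_iff_odd.mpr hF
    (Nat.even_iff.mpr (FiniteField.even_card_of_char_two h))

theorem FiniteField.index_ker_powMonoidHom {F : Type*} [Field F] [Finite F] {n t : ℕ}
    (hn : 0 < n) (hF : Nat.card F = n * t + 1) :
    (powMonoidHom n : Fˣ →* Fˣ).ker.index = t := by
  rw [IsCyclic.index_powMonoidHom_ker, Nat.card_units, hF,
    Nat.add_sub_cancel, Nat.gcd_mul_right_left, Nat.mul_div_cancel_left _ hn]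

theorem stmt17_general {F : Type*} [Field F] [Fintype F]
    (q t : ℕ) (hq : Fintype.card F = q) (hqt : q = 6 * t + 1)
    (h2 : (2 : F) ^ 6 ≠ 1) :
    ∃ C : Finset F, C.card = t ∧ (∀ c ∈ C, c ≠ 0) ∧
      (∀ c ∈ C, ∀ d ∈ C, c ^ 6 = d ^ 6 → c = d) ∧
      (∀ x : F, x ≠ 0 → ∃ c ∈ C, ∃ u : F, u ^ 6 = 1 ∧ x = c * u) ∧
      (∀ c ∈ C, 2 * c ∈ C ∨ c / 2 ∈ C) := by
  classical
  subst hq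
  set H := (powMonoidHom 6 : Fˣ →* Fˣ).ker
  have hmk (a b : Fˣ) : (a : Fˣ ⧸ H) = b ↔ (a : F) ^ 6 = (b : F) ^ 6 := by
    rw [QuotientGroup.mk_eq_mk_iff_ker, powMonoidHom_apply, powMonoidHom_apply, Units.ext_iff,
      Units.val_pow_eq_pow_val, Units.val_pow_eq_pow_val]
  set two : Fˣ := Units.mk0 2 (FiniteField.two_ne_zero_of_odd_card ⟨3 * t, by omega⟩)
  have hord : 1 < orderOf (two : Fˣ ⧸ H) :=
    one_lt_orderOf_of_ne_one fun h => h2 (by simpa [two] using (hmk two 1).mp h)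
  obtain ⟨σ, hσ, hstep⟩ := QuotientGroup.exists_section_mul_or_inv_mul H hord
  let ι : Fˣ ⧸ H ↪ F :=
    ⟨fun x => (σ x : F), Units.val_injective.comp (Function.LeftInverse.injective hσ)⟩
  refine ⟨Finset.univ.map ι, ?_, ?_, ?_, ?_, ?_⟩
  · rw [Finset.card_map, Finset.card_univ, ← Nat.card_eq_fintype_card, ← Subgroup.index,
      FiniteField.index_ker_powMonoidHom (by norm_num) (Nat.card_eq_fintype_card.trans hqt)]
  · simp [ι]
  · simp only [Finset.mem_map, Finset.mem_univ, true_and]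
    rintro - ⟨x, rfl⟩ - ⟨y, rfl⟩ h
    rw [← hσ x, ← hσ y, (hmk _ _).2 h]
  · intro x hx
    set u : Fˣ := Units.mk0 x hx
    refine ⟨_, Finset.mem_map_of_mem ι (Finset.mem_univ (u : Fˣ ⧸ H)), ((σ u)⁻¹ * u : Fˣ), ?_, ?_⟩
    · have h6 : ((σ u)⁻¹ * u) ^ 6 = 1 := QuotientGroup.eq.mp (hσ u)
      rw [← Units.val_pow_eq_pow_val, h6, Units.val_one]
    · simp [ι, u]
  · simp only [Finset.mem_map, Finset.mem_univ, true_and]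
    rintro - ⟨x, rfl⟩
    rcases hstep x with h | h
    · exact Or.inl ⟨two * x, by simp [ι, h, two]⟩
    · exact Or.inr ⟨(two : Fˣ ⧸ H)⁻¹ * x, by simp [ι, h, two, div_eq_inv_mul]⟩

/-- In a finite field of cardinality `q = 6t + 1` in which `2` is not a sixth
root of unity, there is a complete set `C` of representatives for the cosets of
the sixth roots of unity in `Fˣ` such that for every `c ∈ C`, either `2c ∈ C`
or `c/2 ∈ C`. -/
theorem stmt17 {F : Type*} [Field F] [Fintype F] [DecidableEq F]
    (q t : ℕ) (hq : Fintype.card F = q) (ht : 1 ≤ t) (hqt : q = 6 * t + 1)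
    (h2 : (2 : F) ^ 6 ≠ 1) :
    ∃ C : Finset F, C.card = t ∧ (∀ c ∈ C, c ≠ 0) ∧
      (∀ c ∈ C, ∀ d ∈ C, c ^ 6 = d ^ 6 → c = d) ∧
      (∀ x : F, x ≠ 0 → ∃ c ∈ C, ∃ u : F, u ^ 6 = 1 ∧ x = c * u) ∧
      (∀ c ∈ C, 2 * c ∈ C ∨ c / 2 ∈ C) :=
  stmt17_general q t hq hqt h2
end

section
/- For every natural number m ≥ 1 there exists a strongly anti-pasch Steiner triple system of order 3^m; that is, there is a finite set X with |X| = 3^m and a Steiner quasigroup operation ⋆ on X whose associated Steiner triple system S satisfies β(S) = C(3^m, 3). -/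
private lemma zmod3_self : ∀ z : ZMod 3, -(z + z) = z := by decide

private lemma zmod3_key : ∀ u v w : ZMod 3, -(u + v + w + v + (u + v + w + w)) = u := by decide

/-- For every `m ≥ 1` there is a strongly anti-pasch Steiner triple system of
order `3^m`. -/
theorem stmt18 (m : ℕ) (hm : 1 ≤ m) :
    ∃ star : Fin (3 ^ m) → Fin (3 ^ m) → Fin (3 ^ m),
      IsSteinerQuasigroup star ∧ betaInv star = (3 ^ m).choose 3 := by
  have hcard : Fintype.card (Fin m → ZMod 3) = 3 ^ m := by
    simp [Fintype.card_fun]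
  let e : Fin (3 ^ m) ≃ (Fin m → ZMod 3) :=
    (Fintype.equivFinOfCardEq hcard).symm
  refine ⟨fun x y => e.symm (-(e x + e y)), ⟨?_, ?_, ?_⟩, ?_⟩
  · intro a
    show e.symm (-(e a + e a)) = a
    have : -(e a + e a) = e a := by funext i; exact zmod3_self _
    rw [this, Equiv.symm_apply_apply]
  · intro a b
    show e.symm (-(e a + e b)) = e.symm (-(e b + e a))
    rw [add_comm (e a)]
  · intro a b
    show e.symm (-(e a + e (e.symm (-(e a + e b))))) = b
    rw [Equiv.apply_symm_apply]
    have : -(e a + -(e a + e b)) = e b := by abel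
    rw [this, Equiv.symm_apply_apply]
  · have hinj : ∀ {x y : Fin (3 ^ m)}, e x = e y → x = y := fun h => e.injective h
    have hB : BSet (fun x y => e.symm (-(e x + e y))) =
        ↑(Finset.univ.powersetCard 3 : Finset (Finset (Fin (3 ^ m)))) := by
      ext B
      simp only [BSet, Set.mem_setOf_eq, Finset.mem_coe, Finset.mem_powersetCard, Finset.subset_univ, true_and]
      constructor
      · rintro ⟨a, b, c, hab, hac, hbc, rfl⟩
        have h1 : e.symm (-(e a + e b)) ≠ e.symm (-(e b + e c)) := by
          intro h
          apply hac
          apply hinj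
          have := e.symm.injective h
          have := neg_injective this
          linear_combination this - (by rfl : e b = e b)
        have h2 : e.symm (-(e a + e b)) ≠ e.symm (-(e c + e a)) := by
          intro h
          apply hbc
          apply hinj
          have := neg_injective (e.symm.injective h)
          linear_combination this
        have h3 : e.symm (-(e b + e c)) ≠ e.symm (-(e c + e a)) := by
          intro h
          apply hab.symm
          apply hinj
          have := neg_injective (e.symm.injective h)
          linear_combination this
        rw [Finset.card_insert_of_notMem (by
            simp only [Finset.mem_insert, Finset.mem_singleton, not_or]; exact ⟨h1, h2⟩),
          Finset.card_insert_of_notMem (by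
            simp only [Finset.mem_singleton]; exact h3), Finset.card_singleton]
      · intro hB
        obtain ⟨x, y, z, hxy, hxz, hyz, rfl⟩ := Finset.card_eq_three.mp hB
        set s : Fin m → ZMod 3 := e x + e y + e z with hs
        refine ⟨e.symm (s + e y), e.symm (s + e z), e.symm (s + e x), ?_, ?_, ?_, ?_⟩
        · intro h
          exact hyz (hinj (by have := e.symm.injective h; linear_combination this))
        · intro h
          exact hxy.symm (hinj (by have := e.symm.injective h; linear_combination this))
        · intro h
          exact hxz.symm (hinj (by have := e.symm.injective h; linear_combination this))
        · have key : ∀ u v : Fin m → ZMod 3,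
              e.symm (-(e (e.symm (s + u)) + e (e.symm (s + v)))) = e.symm (-(s + u + (s + v))) := by
            intro u v; rw [Equiv.apply_symm_apply, Equiv.apply_symm_apply]
          have goal1 : e.symm (-(s + e y + (s + e z))) = x := by
            have : -(s + e y + (s + e z)) = e x := by
              funext i; exact zmod3_key (e x i) (e y i) (e z i)
            rw [this, Equiv.symm_apply_apply]
          have goal2 : e.symm (-(s + e z + (s + e x))) = y := by
            have : -(s + e z + (s + e x)) = e y := by
              funext i
              have := zmod3_key (e y i) (e z i) (e x i)
              calc -(s i + e z i + (s i + e x i))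
                  = -(e y i + e z i + e x i + e z i + (e y i + e z i + e x i + e x i)) := by
                    simp only [hs, Pi.add_apply]; ring_nf
                _ = e y i := this
            rw [this, Equiv.symm_apply_apply]
          have goal3 : e.symm (-(s + e x + (s + e y))) = z := by
            have : -(s + e x + (s + e y)) = e z := by
              funext i
              have := zmod3_key (e z i) (e x i) (e y i)
              calc -(s i + e x i + (s i + e y i))
                  = -(e z i + e x i + e y i + e x i + (e z i + e x i + e y i + e y i)) := by
                    simp only [hs, Pi.add_apply]; ring_nf
                _ = e z i := this
            rw [this, Equiv.symm_apply_apply]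
          rw [key, key, key, goal1, goal2, goal3]
    unfold betaInv
    rw [hB, Set.ncard_coe_finset, Finset.card_powersetCard, Finset.card_univ, Fintype.card_fin]
end

section
/- For every Steiner triple system S of order n, γ(S) ≠ (1/3)·C(n,2) − 1. -/
namespace IsSteinerQuasigroup

variable {X : Type*} {star : X → X → X}

theorem comm (hq : IsSteinerQuasigroup star) (a b : X) : star a b = star b a := hq.2.1 a b

theorem mul_mul_self (hq : IsSteinerQuasigroup star) (a b : X) : star a (star a b) = b :=
  hq.2.2 a b

theorem mul_left_injective (hq : IsSteinerQuasigroup star) (a : X) :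
    Function.Injective (star a) :=
  Function.LeftInverse.injective (hq.mul_mul_self a)

theorem mul_ne_left (hq : IsSteinerQuasigroup star) {a b : X} (h : a ≠ b) : star a b ≠ a :=
  fun hab => h (hq.mul_left_injective a (hab.trans (hq.1 a).symm)).symm

theorem mul_ne_right (hq : IsSteinerQuasigroup star) {a b : X} (h : a ≠ b) : star a b ≠ b :=
  hq.comm a b ▸ hq.mul_ne_left h.symm

theorem mul_eq_rotate (hq : IsSteinerQuasigroup star) {a b c : X} (h : star a b = c) :
    star b c = a := by
  rw [← h, hq.comm a b, hq.mul_mul_self]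

variable [DecidableEq X]

theorem insert_mul_mem_blocksOf (hq : IsSteinerQuasigroup star) {a b : X} (h : a ≠ b) :
    ({a, b, star a b} : Finset X) ∈ blocksOf star :=
  ⟨a, b, star a b, h, (hq.mul_ne_left h).symm, (hq.mul_ne_right h).symm, rfl, rfl⟩

theorem eq_insert_mul_of_mem_blocksOf (hq : IsSteinerQuasigroup star) {B : Finset X}
    (hB : B ∈ blocksOf star) {p q : X} (hp : p ∈ B) (hq' : q ∈ B) (hpq : p ≠ q) :
    B = {p, q, star p q} := by
  obtain ⟨a, b, c, hab, hac, hbc, rfl, habc⟩ := hB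
  have hbca := hq.mul_eq_rotate habc
  have hcab := hq.mul_eq_rotate hbca
  simp only [Finset.mem_insert, Finset.mem_singleton] at hp hq'
  ext t
  simp only [Finset.mem_insert, Finset.mem_singleton]
  grind [hq.comm a b, hq.comm b c, hq.comm c a]

theorem mem_blocksOf_iff (hq : IsSteinerQuasigroup star) {a b c : X} (hab : a ≠ b)
    (hac : a ≠ c) (hbc : b ≠ c) : ({a, b, c} : Finset X) ∈ blocksOf star ↔ star a b = c := by
  refine ⟨fun h => ?_, fun h => ⟨a, b, c, hab, hac, hbc, rfl, h⟩⟩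
  have hc : c ∈ ({a, b, star a b} : Finset X) := by
    rw [← hq.eq_insert_mul_of_mem_blocksOf h (by simp) (by simp) hab]; simp
  simp only [Finset.mem_insert, Finset.mem_singleton] at hc
  tauto

theorem triangle_eq_of_mul_eq (hq : IsSteinerQuasigroup star) {a b c : X}
    (h : star a b = c) : ({star a b, star b c, star c a} : Finset X) = {a, b, c} := by
  rw [h, hq.mul_eq_rotate h, hq.mul_eq_rotate (hq.mul_eq_rotate h), Finset.insert_comm,
    Finset.pair_comm c b]

theorem BSet_eq_ASet_union_blocksOf (hq : IsSteinerQuasigroup star) :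
    BSet star = ASet star ∪ blocksOf star := by
  ext B
  constructor
  · rintro ⟨a, b, c, hab, hac, hbc, rfl⟩
    by_cases hB : ({a, b, c} : Finset X) ∈ blocksOf star
    · right
      rwa [hq.triangle_eq_of_mul_eq ((hq.mem_blocksOf_iff hab hac hbc).1 hB)]
    · exact .inl ⟨a, b, c, hab, hac, hbc, hB, rfl⟩
  · rintro (⟨a, b, c, hab, hac, hbc, -, rfl⟩ | ⟨a, b, c, hab, hac, hbc, rfl, habc⟩)
    · exact ⟨a, b, c, hab, hac, hbc, rfl⟩
    · exact ⟨a, b, c, hab, hac, hbc, (hq.triangle_eq_of_mul_eq habc).symm⟩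

theorem insert_mul_mem_ASet (hq : IsSteinerQuasigroup star) {a b c : X} (hab : a ≠ b)
    (hac : a ≠ c) (hbc : b ≠ c) (hnb : ({a, b, c} : Finset X) ∉ blocksOf star)
    (hB : ({star a b, star b c, star c a} : Finset X) ∈ blocksOf star) :
    ({a, b, star a b} : Finset X) ∈ ASet star := by
  have hxy : star a b ≠ star b c := by
    rw [hq.comm a b]; exact (hq.mul_left_injective b).ne hac
  have hxz : star a b ≠ star c a := by
    rw [hq.comm c a]; exact (hq.mul_left_injective a).ne hbc
  have hyz : star b c ≠ star c a := by
    rw [hq.comm b c]; exact (hq.mul_left_injective c).ne hab.symm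
  have hcy : star c (star b c) = b := hq.mul_eq_rotate rfl
  have hzc : star (star c a) c = a := hq.mul_eq_rotate (hq.mul_eq_rotate rfl)
  have hyz_mul : star (star b c) (star c a) = star a b :=
    hq.mul_eq_rotate ((hq.mem_blocksOf_iff hxy hxz hyz).1 hB)
  have hcy_ne : c ≠ star b c := (hq.mul_ne_right hbc).symm
  have hcz_ne : c ≠ star c a := (hq.mul_ne_left hac.symm).symm
  refine ⟨c, star b c, star c a, hcy_ne, hcz_ne, hyz, fun hcyz => hnb ?_, ?_⟩
  · rw [hq.mem_blocksOf_iff hcy_ne hcz_ne hyz, hcy] at hcyz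
    exact (hq.mem_blocksOf_iff hab hac hbc).2 (hq.mul_eq_rotate hcyz.symm)
  · rw [hcy, hyz_mul, hzc, Finset.insert_comm, Finset.pair_comm (star a b) a,
      Finset.insert_comm b a]

theorem exists_ne_mem_blocksOf_inter_ASet (hq : IsSteinerQuasigroup star) {B : Finset X}
    (hB : B ∈ blocksOf star ∩ ASet star) : ∃ B' ∈ blocksOf star ∩ ASet star, B' ≠ B := by
  obtain ⟨hBS, a, b, c, hab, hac, hbc, hnb, rfl⟩ := hB
  refine ⟨{a, b, star a b}, ⟨hq.insert_mul_mem_blocksOf hab,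
    hq.insert_mul_mem_ASet hab hac hbc hnb hBS⟩, fun h => ?_⟩
  have ha : a ∈ ({star a b, star b c, star c a} : Finset X) := h ▸ by simp
  have hbca : star b c ≠ a := fun h' => hnb <|
    (hq.mem_blocksOf_iff hab hac hbc).2 (hq.mul_eq_rotate (hq.mul_eq_rotate h'))
  simp only [Finset.mem_insert, Finset.mem_singleton] at ha
  rcases ha with ha | ha | ha
  exacts [hq.mul_ne_left hab ha.symm, hbca ha.symm, hq.mul_ne_right hac.symm ha.symm]

theorem ncard_blocksOf_inter_ASet_ne_one (hq : IsSteinerQuasigroup star) :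
    (blocksOf star ∩ ASet star).ncard ≠ 1 := by
  intro h
  obtain ⟨B, hB⟩ := Set.ncard_eq_one.1 h
  obtain ⟨B', hB', hne⟩ := hq.exists_ne_mem_blocksOf_inter_ASet (hB ▸ rfl : B ∈ _)
  exact hne (Set.mem_singleton_iff.1 (hB ▸ hB'))

theorem betaInv_add_ncard_inter [Finite X] (hq : IsSteinerQuasigroup star) :
    betaInv star + (blocksOf star ∩ ASet star).ncard =
      alphaInv star + (blocksOf star).ncard := by
  rw [betaInv, alphaInv, hq.BSet_eq_ASet_union_blocksOf, Set.inter_comm,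
    Set.ncard_union_add_ncard_inter]

theorem card_of_mem_blocksOf {B : Finset X} (hB : B ∈ blocksOf star) : B.card = 3 := by
  obtain ⟨a, b, c, hab, hac, hbc, rfl, -⟩ := hB
  exact Finset.card_eq_three.2 ⟨a, b, c, hab, hac, hbc, rfl⟩

theorem filter_offDiag_insert_mul_eq [Fintype X] (hq : IsSteinerQuasigroup star)
    {B : Finset X} (hB : B ∈ blocksOf star) :
    {p ∈ (Finset.univ : Finset X).offDiag | {p.1, p.2, star p.1 p.2} = B} = B.offDiag := by
  ext ⟨p, q⟩
  simp only [Finset.mem_filter, Finset.mem_offDiag, Finset.mem_univ, true_and]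
  constructor
  · rintro ⟨hpq, rfl⟩
    simp [hpq]
  · rintro ⟨hp, hq', hpq⟩
    exact ⟨hpq, (hq.eq_insert_mul_of_mem_blocksOf hB hp hq' hpq).symm⟩

theorem three_mul_ncard_blocksOf [Fintype X] (hq : IsSteinerQuasigroup star) :
    3 * (blocksOf star).ncard = (Fintype.card X).choose 2 := by
  set g : X × X → Finset X := fun p => {p.1, p.2, star p.1 p.2}
  set D := (Finset.univ : Finset X).offDiag
  have hS : blocksOf star = ↑(D.image g) := by
    ext B
    simp only [Finset.coe_image, Set.mem_image, Finset.mem_coe, Finset.mem_offDiag,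
      Finset.mem_univ, true_and, D, g, Prod.exists]
    constructor
    · rintro ⟨a, b, c, hab, -, -, rfl, rfl⟩
      exact ⟨a, b, hab, rfl⟩
    · rintro ⟨a, b, hab, rfl⟩
      exact hq.insert_mul_mem_blocksOf hab
  have hfiber : ∀ B ∈ D.image g, {p ∈ D | g p = B}.card = 6 := by
    intro B hB
    have hB : B ∈ blocksOf star := hS ▸ hB
    rw [hq.filter_offDiag_insert_mul_eq hB, Finset.offDiag_card, card_of_mem_blocksOf hB]
  have hD : D.card = 6 * (blocksOf star).ncard := by
    rw [Finset.card_eq_sum_card_image g D, Finset.sum_congr rfl hfiber, Finset.sum_const,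
      smul_eq_mul, hS, Set.ncard_coe_finset, mul_comm]
  rw [Finset.offDiag_card, Finset.card_univ] at hD
  grind [Nat.mul_sub_one, Nat.choose_two_right]

end IsSteinerQuasigroup

/-- For every Steiner triple system `S` of order `n`,
`γ(S) ≠ (1/3)·C(n,2) − 1` (stated multiplied by 3, in ℤ). -/
theorem stmt19 {X : Type*} [Fintype X] [DecidableEq X]
    (star : X → X → X) (hq : IsSteinerQuasigroup star)
    (n : ℕ) (hcard : Fintype.card X = n) :
    3 * ((betaInv star : ℤ) - alphaInv star) ≠ (n.choose 2 : ℤ) - 3 := by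
  subst hcard
  have hcount := hq.betaInv_add_ncard_inter
  have hblocks := hq.three_mul_ncard_blocksOf
  have hpair := hq.ncard_blocksOf_inter_ASet_ne_one
  omega
end
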